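/- arXiv:1704.06464 — 2 statements merged into one kernel-verified Lean document; each statement's English description precedes it below -/
import Mathlib

section
/- Let m > 2 and n ≥ 1, and let G be the metacyclic group M_{2mn} = ⟨a, b : a^m = b^{2n} = 1, b a b^{-1} = a^{-1}⟩, a group of order 2mn. Then the energy of the commuting graph satisfies E(Γ_{M_{2mn}}) = 4mn − 2m − 2n − 2 if m is odd, and E(Γ_{M_{2mn}}) = 4mn − 4n − m − 2 if m is even. -/
open scoped Classical

/-- The commuting graph of a group `G`: its vertices are the non-central
elements of `G`, and two distinct vertices are adjacent iff they commute. -/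
noncomputable def commGraph (G : Type*) [Group G] :
    SimpleGraph {g : G // g ∉ Subgroup.center G} where
  Adj x y := x ≠ y ∧ (x : G) * y = (y : G) * x
  symm := ⟨fun _ _ h => ⟨h.1.symm, h.2.symm⟩⟩
  loopless := ⟨fun _ h => h.1 rfl⟩

lemma adjMatrix_isHermitian {V : Type*} [Fintype V] (Γ : SimpleGraph V) :
    (Γ.adjMatrix ℝ).IsHermitian := by
  ext i j
  simp [Matrix.conjTranspose_apply, SimpleGraph.adj_comm]

/-- The energy of a finite graph: the sum of the absolute values of the
eigenvalues of its adjacency matrix. -/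
noncomputable def graphEnergy {V : Type*} [Fintype V] (Γ : SimpleGraph V) : ℝ :=
  ∑ i, |(adjMatrix_isHermitian Γ).eigenvalues i|

/-!
Writing elements of `M_{2mn}` as `a^i b^j` (`i : ZMod m`, `j : ZMod (2n)`), one has
`b^j a^k = a^((-1)^j k) b^j`, so the centre consists of the `a^i b^j` with `2i = 0` and `j` even
(`gcd(m, 2) n` elements). The non-central elements with `j` even lie in the abelian subgroup
`⟨a, b²⟩`, and two elements with `j` odd commute iff they have the same `2i`; hence the commuting
graph is a disjoint union of `1 + m / gcd(m, 2)` cliques.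

A disjoint union of cliques on `V` with `c` components has energy `2(|V| - c)`. Its adjacency
matrix is `N Nᵀ - 1`, where `N` is the vertex–clique incidence matrix. Every nonzero eigenvalue of
`N Nᵀ` is an eigenvalue of `Nᵀ N = diag(clique sizes)`, so the eigenvalues of the graph are `-1`
or nonnegative; `-1` occurs `|V| - rank (N Nᵀ) = |V| - c` times, and they sum to the trace `0`.
-/

section

open Matrix

lemma Matrix.IsHermitian.rank_add_smul_one {𝕜 n : Type*} [RCLike 𝕜] [Fintype n] [DecidableEq n]
    {A : Matrix n n 𝕜} (hA : A.IsHermitian) (c : ℝ) :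
    (A + (c : 𝕜) • 1).rank = Fintype.card {i // hA.eigenvalues i ≠ -c} := by
  have hdiag : A + (c : 𝕜) • 1 = Unitary.conjStarAlgAut 𝕜 _ hA.eigenvectorUnitary
      (diagonal (RCLike.ofReal ∘ (hA.eigenvalues + fun _ => c))) := by
    conv_lhs => rw [hA.spectral_theorem]
    rw [← map_one (Unitary.conjStarAlgAut 𝕜 _ hA.eigenvectorUnitary), ← map_smul, ← map_add]
    congr 1
    ext i j
    by_cases h : i = j <;> simp [h, Algebra.algebraMap_eq_smul_one]
  rw [hdiag, Unitary.conjStarAlgAut_apply, ← Unitary.coe_star]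
  simp [-isUnit_iff_ne_zero, -Unitary.coe_star, rank_diagonal]
  simp only [← map_add, FaithfulSMul.algebraMap_eq_zero_iff, add_eq_zero_iff_eq_neg]

lemma Matrix.mem_range_of_mul_transpose_mulVec_eq_smul {R V C : Type*} [Field R] [Fintype V]
    [Fintype C] [DecidableEq C] {N : Matrix V C R} {d : C → R} (hN : Nᵀ * N = diagonal d)
    {v : V → R} {μ : R} (hv : (N * Nᵀ) *ᵥ v = μ • v) (hv0 : v ≠ 0) (hμ : μ ≠ 0) :
    μ ∈ Set.range d := by
  have hw0 : Nᵀ *ᵥ v ≠ 0 := by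
    intro hw
    rw [← mulVec_mulVec, hw, mulVec_zero, eq_comm, smul_eq_zero] at hv
    exact hv.elim hμ hv0
  have hw : diagonal d *ᵥ (Nᵀ *ᵥ v) = μ • (Nᵀ *ᵥ v) := by
    rw [← hN, mulVec_mulVec, Matrix.mul_assoc, ← mulVec_mulVec, hv, mulVec_smul]
  obtain ⟨c, hc⟩ := Function.ne_iff.mp hw0
  refine ⟨c, mul_right_cancel₀ hc ?_⟩
  simpa [mulVec_diagonal] using congrFun hw c

lemma sum_abs_eq_two_mul_card_eq_neg_one {ι : Type*} [Fintype ι] {f : ι → ℝ}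
    (hf : ∀ i, f i = -1 ∨ 0 ≤ f i) (hsum : ∑ i, f i = 0) :
    ∑ i, |f i| = 2 * Fintype.card {i // f i = -1} := by
  have habs : ∀ i, |f i| = f i + 2 * if f i = -1 then 1 else 0 := by
    intro i
    rcases hf i with h | h
    · rw [h]; norm_num
    · rw [abs_of_nonneg h, if_neg (by linarith)]; ring
  simp_rw [habs, Finset.sum_add_distrib, ← Finset.mul_sum, Finset.sum_boole, hsum,
    Fintype.card_subtype]
  simp

def partitionMatrix {V C : Type*} [DecidableEq C] (q : V → C) : Matrix V C ℝ :=
  of fun x c => if q x = c then 1 else 0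

lemma partitionMatrix_mul_transpose {V C : Type*} [Fintype C] [DecidableEq C] (q : V → C) :
    partitionMatrix q * (partitionMatrix q)ᵀ = of fun x y => if q x = q y then 1 else 0 := by
  ext x y
  simp [partitionMatrix, mul_apply, eq_comm]

lemma transpose_mul_partitionMatrix {V C : Type*} [Fintype V] [DecidableEq C] (q : V → C) :
    (partitionMatrix q)ᵀ * partitionMatrix q =
      diagonal fun c => (Fintype.card {x // q x = c} : ℝ) := by
  ext c d
  simp only [partitionMatrix, mul_apply, transpose_apply, of_apply, mul_ite, mul_one, mul_zero,
    diagonal_apply, Fintype.card_subtype]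
  split_ifs with h
  · subst h
    simp_rw [← ite_and, and_self, Finset.sum_boole]
  · refine Finset.sum_eq_zero fun x _ => ?_
    grind

lemma rank_partitionMatrix_mul_transpose {V C : Type*} [Fintype V] [Fintype C] [DecidableEq C]
    {q : V → C} (hq : Function.Surjective q) :
    (partitionMatrix q * (partitionMatrix q)ᵀ).rank = Fintype.card C := by
  rw [rank_self_mul_transpose, ← rank_transpose_mul_self, transpose_mul_partitionMatrix,
    rank_diagonal, Fintype.card_subtype]
  congr 1
  refine Finset.filter_true_of_mem fun c _ => ?_
  obtain ⟨x, rfl⟩ := hq c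
  exact Nat.cast_ne_zero.mpr (Fintype.card_pos_iff.mpr ⟨⟨x, rfl⟩⟩).ne'

theorem graphEnergy_eq_of_adj_iff {V C : Type*} [Fintype V] [Fintype C] (Γ : SimpleGraph V)
    {q : V → C} (hq : Function.Surjective q) (hadj : ∀ x y, Γ.Adj x y ↔ x ≠ y ∧ q x = q y) :
    graphEnergy Γ = 2 * ((Fintype.card V : ℝ) - Fintype.card C) := by
  set hA := adjMatrix_isHermitian Γ
  have hN : partitionMatrix q * (partitionMatrix q)ᵀ = Γ.adjMatrix ℝ + 1 := by
    ext x y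
    rw [partitionMatrix_mul_transpose]
    by_cases h : x = y
    · subst h; simp
    · simp [h, hadj, one_apply]
  have heig : ∀ i, hA.eigenvalues i = -1 ∨ 0 ≤ hA.eigenvalues i := by
    intro i
    refine or_iff_not_imp_left.mpr fun hi => ?_
    have hv : (partitionMatrix q * (partitionMatrix q)ᵀ) *ᵥ ⇑(hA.eigenvectorBasis i) =
        (hA.eigenvalues i + 1) • ⇑(hA.eigenvectorBasis i) := by
      rw [hN, add_mulVec, hA.mulVec_eigenvectorBasis, add_smul]
      simp
    obtain ⟨c, hc⟩ := mem_range_of_mul_transpose_mulVec_eq_smul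
      (transpose_mul_partitionMatrix q) hv
      (by simpa using hA.eigenvectorBasis.orthonormal.ne_zero i) (by grind)
    simp only at hc
    have : (1 : ℝ) ≤ Fintype.card {x // q x = c} := Nat.one_le_cast.mpr <|
      Nat.one_le_iff_ne_zero.mpr fun h0 => hi <| by rw [h0, Nat.cast_zero] at hc; linarith
    linarith
  have hsum : ∑ i, hA.eigenvalues i = 0 := by
    simpa using (hA.trace_eq_sum_eigenvalues).symm.trans (Γ.trace_adjMatrix ℝ)
  have hrank : Fintype.card {i // hA.eigenvalues i ≠ -1} = Fintype.card C := by
    have := hA.rank_add_smul_one 1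
    rw [RCLike.ofReal_one, one_smul, ← hN, rank_partitionMatrix_mul_transpose hq] at this
    exact this.symm
  have hcard : Fintype.card {i // hA.eigenvalues i = -1} = Fintype.card V - Fintype.card C := by
    rw [← hrank, Fintype.card_subtype_compl, Nat.sub_sub_self (Fintype.card_subtype_le _)]
  rw [graphEnergy, sum_abs_eq_two_mul_card_eq_neg_one heig hsum, hcard,
    Nat.cast_sub (Fintype.card_le_of_surjective q hq)]

end

lemma even_val_iff_mem_range_two_nsmul {n : ℕ} [NeZero n] (j : ZMod (2 * n)) :
    Even j.val ↔ j ∈ (nsmulAddMonoidHom 2 : ZMod (2 * n) →+ ZMod (2 * n)).range := by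
  constructor
  · rintro ⟨t, ht⟩
    exact ⟨t, by rw [nsmulAddMonoidHom_apply, two_nsmul, ← Nat.cast_add, ← ht,
      ZMod.natCast_zmod_val]⟩
  · rintro ⟨k, rfl⟩
    rw [nsmulAddMonoidHom_apply, two_nsmul, ZMod.val_add, Nat.even_iff,
      Nat.mod_mod_of_dvd _ (dvd_mul_right 2 n)]
    omega

lemma card_two_nsmul_eq_zero_and_even_val (m n : ℕ) [NeZero m] [NeZero n] :
    Fintype.card {p : ZMod m × ZMod (2 * n) // 2 • p.1 = 0 ∧ Even p.2.val} = m.gcd 2 * n := by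
  rw [Fintype.card_congr (Equiv.subtypeProdEquivProd (p := fun i : ZMod m => 2 • i = 0)
      (q := fun j : ZMod (2 * n) => Even j.val)), Fintype.card_prod,
    ← Nat.card_eq_fintype_card, ← Nat.card_eq_fintype_card]
  have h2 : Nat.card {i : ZMod m // 2 • i = 0} = m.gcd 2 := by
    simpa using IsAddCyclic.card_nsmulAddMonoidHom_ker (ZMod m) 2
  have heven : Nat.card {j : ZMod (2 * n) // Even j.val} = n := by
    rw [Nat.card_congr (Equiv.subtypeEquivRight even_val_iff_mem_range_two_nsmul),
      IsAddCyclic.card_nsmulAddMonoidHom_range, Nat.card_zmod, Nat.gcd_mul_right_left]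
    simp
  rw [h2, heven]

lemma card_range_two_nsmul (m : ℕ) [NeZero m] :
    Nat.card (nsmulAddMonoidHom 2 : ZMod m →+ ZMod m).range = m / m.gcd 2 := by
  rw [IsAddCyclic.card_nsmulAddMonoidHom_range, Nat.card_zmod]

section ConjInv

variable {G : Type*} [Group G] {a b : G}

lemma conj_zpow_of_conj_eq_inv (hrel : b * a * b⁻¹ = a⁻¹) (j : ℤ) :
    b ^ j * a * (b ^ j)⁻¹ = a ^ (j.negOnePow : ℤ) := by
  have hrel' : b⁻¹ * a * b⁻¹⁻¹ = a⁻¹ := by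
    simpa [mul_assoc] using congrArg (fun x => b⁻¹ * x⁻¹ * b) hrel.symm
  induction j using Int.induction_on with
  | zero => simp
  | succ j ih =>
    calc b ^ ((j : ℤ) + 1) * a * (b ^ ((j : ℤ) + 1))⁻¹
        = b * (b ^ (j : ℤ) * a * (b ^ (j : ℤ))⁻¹) * b⁻¹ := by group
      _ = a ^ (((j : ℤ) + 1).negOnePow : ℤ) := by
        rw [ih, ← conj_zpow, hrel, Int.negOnePow_succ, Units.val_neg, zpow_neg, inv_zpow]
  | pred j ih =>
    calc b ^ (-(j : ℤ) - 1) * a * (b ^ (-(j : ℤ) - 1))⁻¹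
        = b⁻¹ * (b ^ (-(j : ℤ)) * a * (b ^ (-(j : ℤ)))⁻¹) * b⁻¹⁻¹ := by group
      _ = a ^ ((-(j : ℤ) - 1).negOnePow : ℤ) := by
        rw [ih, ← conj_zpow, hrel', Int.negOnePow_sub, Int.negOnePow_one, mul_neg_one,
          Units.val_neg, zpow_neg, inv_zpow]

lemma zpow_mul_zpow_of_conj_eq_inv (hrel : b * a * b⁻¹ = a⁻¹) (j k : ℤ) :
    b ^ j * a ^ k = a ^ ((j.negOnePow : ℤ) * k) * b ^ j :=
  calc b ^ j * a ^ k = (b ^ j * a * (b ^ j)⁻¹) ^ k * b ^ j := by rw [conj_zpow]; group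
    _ = a ^ ((j.negOnePow : ℤ) * k) * b ^ j := by rw [conj_zpow_of_conj_eq_inv hrel, zpow_mul]

lemma zpow_mul_zpow_mul_zpow_mul_zpow_of_conj_eq_inv (hrel : b * a * b⁻¹ = a⁻¹)
    (i j k l : ℤ) :
    a ^ i * b ^ j * (a ^ k * b ^ l) = a ^ (i + (j.negOnePow : ℤ) * k) * b ^ (j + l) := by
  rw [mul_assoc, ← mul_assoc (b ^ j), zpow_mul_zpow_of_conj_eq_inv hrel, zpow_add, zpow_add]
  group

lemma commute_zpow_mul_zpow_iff_of_conj_eq_inv (hrel : b * a * b⁻¹ = a⁻¹) (i j k l : ℤ) :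
    Commute (a ^ i * b ^ j) (a ^ k * b ^ l) ↔
      a ^ (i + (j.negOnePow : ℤ) * k - (k + (l.negOnePow : ℤ) * i)) = 1 := by
  rw [Commute, SemiconjBy, zpow_mul_zpow_mul_zpow_mul_zpow_of_conj_eq_inv hrel,
    zpow_mul_zpow_mul_zpow_mul_zpow_of_conj_eq_inv hrel, add_comm l, mul_left_inj, zpow_sub,
    mul_inv_eq_one]

lemma exists_zpow_mul_zpow_eq_of_closure_eq_top (hrel : b * a * b⁻¹ = a⁻¹)
    (hgen : Subgroup.closure {a, b} = ⊤) (g : G) : ∃ i j : ℤ, a ^ i * b ^ j = g := by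
  induction (hgen ▸ Subgroup.mem_top g : g ∈ Subgroup.closure {a, b})
    using Subgroup.closure_induction with
  | mem x hx =>
    rcases hx with rfl | rfl
    · exact ⟨1, 0, by simp⟩
    · exact ⟨0, 1, by simp⟩
  | one => exact ⟨0, 0, by simp⟩
  | mul x y _ _ hx hy =>
    obtain ⟨i, j, rfl⟩ := hx
    obtain ⟨k, l, rfl⟩ := hy
    exact ⟨_, _, (zpow_mul_zpow_mul_zpow_mul_zpow_of_conj_eq_inv hrel i j k l).symm⟩
  | inv x _ hx =>
    obtain ⟨i, j, rfl⟩ := hx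
    refine ⟨_, -j, (zpow_mul_zpow_of_conj_eq_inv hrel (-j) (-i)).symm.trans ?_⟩
    rw [mul_inv_rev, zpow_neg, zpow_neg]

lemma zpow_mul_zpow_mem_center_iff (hrel : b * a * b⁻¹ = a⁻¹)
    (hgen : Subgroup.closure {a, b} = ⊤) (ha2 : a ^ 2 ≠ 1) (i j : ℤ) :
    a ^ i * b ^ j ∈ Subgroup.center G ↔ a ^ (2 * i) = 1 ∧ Even j := by
  have hcomm := commute_zpow_mul_zpow_iff_of_conj_eq_inv hrel
  rw [Subgroup.center_eq_iInf hgen]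
  simp only [Subgroup.mem_iInf, Subgroup.mem_centralizer_singleton_iff, Set.mem_insert_iff,
    Set.mem_singleton_iff, forall_eq_or_imp, forall_eq]
  have hcomm_a : Commute (a ^ i * b ^ j) a ↔ Even j := by
    have h := hcomm i j 1 0
    rw [zpow_one, zpow_zero, mul_one, Int.negOnePow_zero, Units.val_one, one_mul,
      show ∀ u : ℤ, i + u * 1 - (1 + i) = u - 1 by intro u; ring] at h
    rw [h]
    rcases Int.even_or_odd j with hj | hj
    · simp [Int.negOnePow_even _ hj, hj]
    · rw [Int.negOnePow_odd _ hj, iff_false_intro (Int.not_even_iff_odd.mpr hj), iff_false]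
      rwa [Units.val_neg, Units.val_one, show (-1 - 1 : ℤ) = -(2 : ℕ) by norm_num, zpow_neg,
        inv_eq_one, zpow_natCast]
  have hcomm_b : Commute (a ^ i * b ^ j) b ↔ a ^ (2 * i) = 1 := by
    have h := hcomm i j 0 1
    rwa [zpow_one, zpow_zero, one_mul, Int.negOnePow_one, Units.val_neg, Units.val_one,
      show ∀ u : ℤ, i + u * 0 - (0 + -1 * i) = 2 * i by intro u; ring] at h
  exact (and_congr hcomm_a hcomm_b).trans and_comm

lemma zpow_eq_one_iff_intCast_eq_zero {M : ℕ} (hM : orderOf a = M) (x : ℤ) :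
    a ^ x = 1 ↔ (x : ZMod M) = 0 := by
  rw [ZMod.intCast_zmod_eq_zero_iff_dvd, ← hM, orderOf_dvd_iff_zpow_eq_one]

end ConjInv

namespace Metacyclic

variable {G : Type*} [Group G] {a b : G}

def ofCoords (a b : G) {M N : ℕ} (p : ZMod M × ZMod N) : G := a ^ p.1.val * b ^ p.2.val

lemma ofCoords_eq_zpow {M N : ℕ} (p : ZMod M × ZMod N) :
    ofCoords a b p = a ^ (p.1.val : ℤ) * b ^ (p.2.val : ℤ) := by
  simp [ofCoords]

lemma ofCoords_surjective (hrel : b * a * b⁻¹ = a⁻¹) (hgen : Subgroup.closure {a, b} = ⊤)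
    {M N : ℕ} [NeZero M] [NeZero N] (ha : a ^ M = 1) (hb : b ^ N = 1) :
    Function.Surjective (ofCoords a b (M := M) (N := N)) := by
  intro g
  obtain ⟨i, j, rfl⟩ := exists_zpow_mul_zpow_eq_of_closure_eq_top hrel hgen g
  refine ⟨((i : ZMod M), (j : ZMod N)), ?_⟩
  rw [ofCoords_eq_zpow, ZMod.val_intCast, ZMod.val_intCast, ← zpow_eq_zpow_emod' i ha,
    ← zpow_eq_zpow_emod' j hb]

lemma orderOf_eq_of_card_eq [Fintype G] (hrel : b * a * b⁻¹ = a⁻¹)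
    (hgen : Subgroup.closure {a, b} = ⊤) {M N : ℕ} (ha : a ^ M = 1) (hb : b ^ N = 1)
    (hcard : Fintype.card G = M * N) : orderOf a = M := by
  have hMN : 0 < M * N := hcard ▸ Fintype.card_pos
  have : NeZero N := ⟨(Nat.pos_of_mul_pos_left hMN).ne'⟩
  have : NeZero (orderOf a) := ⟨(orderOf_pos a).ne'⟩
  have hle := Fintype.card_le_of_surjective _
    (ofCoords_surjective hrel hgen (pow_orderOf_eq_one a) hb)
  rw [Fintype.card_prod, ZMod.card, ZMod.card, hcard] at hle
  exact le_antisymm (Nat.le_of_dvd (Nat.pos_of_mul_pos_right hMN) (orderOf_dvd_of_pow_eq_one ha))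
    (Nat.le_of_mul_le_mul_right hle (Nat.pos_of_mul_pos_left hMN))

lemma ofCoords_bijective [Fintype G] (hrel : b * a * b⁻¹ = a⁻¹)
    (hgen : Subgroup.closure {a, b} = ⊤) {M N : ℕ} [NeZero M] [NeZero N] (ha : a ^ M = 1)
    (hb : b ^ N = 1) (hcard : Fintype.card G = M * N) :
    Function.Bijective (ofCoords a b (M := M) (N := N)) :=
  (Fintype.bijective_iff_surjective_and_card _).mpr
    ⟨ofCoords_surjective hrel hgen ha hb, by simp [hcard]⟩

lemma ofCoords_mem_center_iff (hrel : b * a * b⁻¹ = a⁻¹) (hgen : Subgroup.closure {a, b} = ⊤)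
    {M N : ℕ} [NeZero M] (hM : orderOf a = M) (ha2 : a ^ 2 ≠ 1) (p : ZMod M × ZMod N) :
    ofCoords a b p ∈ Subgroup.center G ↔ 2 • p.1 = 0 ∧ Even p.2.val := by
  rw [ofCoords_eq_zpow, zpow_mul_zpow_mem_center_iff hrel hgen ha2, Int.even_coe_nat,
    zpow_eq_one_iff_intCast_eq_zero hM]
  push_cast
  rw [ZMod.natCast_zmod_val, nsmul_eq_mul, Nat.cast_ofNat]

def commClass {M N : ℕ} (p : ZMod M × ZMod N) :
    Option (nsmulAddMonoidHom 2 : ZMod M →+ ZMod M).range :=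
  if Even p.2.val then none else some ((nsmulAddMonoidHom 2).rangeRestrict p.1)

lemma commute_ofCoords_iff (hrel : b * a * b⁻¹ = a⁻¹) (hgen : Subgroup.closure {a, b} = ⊤)
    {M N : ℕ} [NeZero M] (hM : orderOf a = M) (ha2 : a ^ 2 ≠ 1) {p p' : ZMod M × ZMod N}
    (hp : ofCoords a b p ∉ Subgroup.center G) (hp' : ofCoords a b p' ∉ Subgroup.center G) :
    Commute (ofCoords a b p) (ofCoords a b p') ↔ commClass p = commClass p' := by
  rw [ofCoords_mem_center_iff hrel hgen hM ha2] at hp hp'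
  rw [ofCoords_eq_zpow, ofCoords_eq_zpow, commute_zpow_mul_zpow_iff_of_conj_eq_inv hrel,
    zpow_eq_one_iff_intCast_eq_zero hM]
  push_cast
  simp only [ZMod.natCast_zmod_val, commClass]
  have sign_even {x : ZMod N} (hx : Even x.val) : (((x.val : ℤ).negOnePow : ℤ) : ZMod M) = 1 := by
    simp [Int.negOnePow_even _ ((Int.even_coe_nat _).mpr hx)]
  have sign_odd {x : ZMod N} (hx : Odd x.val) : (((x.val : ℤ).negOnePow : ℤ) : ZMod M) = -1 := by
    simp [Int.negOnePow_odd _ ((Int.odd_coe_nat _).mpr hx)]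
  rcases Nat.even_or_odd p.2.val with h | h <;> rcases Nat.even_or_odd p'.2.val with h' | h'
  · simp only [sign_even h, sign_even h', if_pos h, if_pos h', iff_true]
    ring
  · simp only [sign_even h, sign_odd h', if_pos h, if_neg (Nat.not_even_iff_odd.mpr h'),
      reduceCtorEq, iff_false]
    exact fun h0 => hp ⟨by rw [two_nsmul]; linear_combination h0, h⟩
  · simp only [sign_odd h, sign_even h', if_pos h', if_neg (Nat.not_even_iff_odd.mpr h),
      reduceCtorEq, iff_false]
    exact fun h0 => hp' ⟨by rw [two_nsmul]; linear_combination -h0, h'⟩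
  · simp only [sign_odd h, sign_odd h', if_neg (Nat.not_even_iff_odd.mpr h),
      if_neg (Nat.not_even_iff_odd.mpr h'), Option.some_inj, Subtype.ext_iff,
      AddMonoidHom.coe_rangeRestrict, nsmulAddMonoidHom_apply, two_nsmul]
    constructor <;> intro h0 <;> linear_combination h0

lemma exists_commClass_eq {m : ℕ} (hm : 2 < m) {n : ℕ} [NeZero n]
    (c : Option (nsmulAddMonoidHom 2 : ZMod m →+ ZMod m).range) :
    ∃ p : ZMod m × ZMod (2 * n), ¬(2 • p.1 = 0 ∧ Even p.2.val) ∧ commClass p = c := by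
  rcases c with _ | ⟨_, i, rfl⟩
  · refine ⟨(1, 0), fun h => ?_, if_pos (by simp)⟩
    rw [nsmul_one, ZMod.natCast_eq_zero_iff] at h
    have := Nat.le_of_dvd two_pos h.1
    omega
  · have hone : ¬Even (1 : ZMod (2 * n)).val := by
      rw [ZMod.val_one_eq_one_mod, Nat.mod_eq_of_lt (by have := NeZero.pos n; omega)]
      exact Nat.not_even_one
    exact ⟨(i, 1), fun h => hone h.2, if_neg hone⟩

end Metacyclic

open Metacyclic in
theorem graphEnergy_commGraph_of_metacyclic {m n : ℕ} (hm : 2 < m) {G : Type*} [Group G]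
    [Fintype G] {a b : G} (ha : a ^ m = 1) (hb : b ^ (2 * n) = 1) (hrel : b * a * b⁻¹ = a⁻¹)
    (hgen : Subgroup.closure {a, b} = ⊤) (hcard : Fintype.card G = 2 * m * n) :
    graphEnergy (commGraph G) =
      2 * (2 * m * n - m.gcd 2 * n - m / m.gcd 2 - 1 : ℝ) := by
  have hcard' : Fintype.card G = m * (2 * n) := by rw [hcard]; ring
  have hmn : 0 < m * (2 * n) := hcard' ▸ Fintype.card_pos
  have : NeZero m := ⟨(Nat.pos_of_mul_pos_right hmn).ne'⟩
  have hn : 0 < n := by have := Nat.pos_of_mul_pos_left hmn; omega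
  have : NeZero n := ⟨hn.ne'⟩
  have hM : orderOf a = m := orderOf_eq_of_card_eq hrel hgen ha hb hcard'
  have ha2 : a ^ 2 ≠ 1 := pow_ne_one_of_lt_orderOf two_ne_zero (hM ▸ hm)
  set e := Equiv.ofBijective _ (ofCoords_bijective hrel hgen ha hb hcard')
  have he : ∀ p, e p = ofCoords a b p := fun _ => rfl
  let q : {g : G // g ∉ Subgroup.center G} → Option _ := fun x => commClass (e.symm x)
  have hq : Function.Surjective q := fun c => by
    obtain ⟨p, hp, rfl⟩ := exists_commClass_eq hm (n := n) c
    exact ⟨⟨e p, by rwa [he, ofCoords_mem_center_iff hrel hgen hM ha2]⟩, by simp [q]⟩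
  have hadj : ∀ x y, (commGraph G).Adj x y ↔ x ≠ y ∧ q x = q y := fun x y =>
    and_congr_right fun _ => by
      change Commute (x : G) y ↔ _
      have := commute_ofCoords_iff hrel hgen hM ha2 (p := e.symm x) (p' := e.symm y)
        (by simpa [← he] using x.2) (by simpa [← he] using y.2)
      simpa [← he] using this
  have hZ : Fintype.card (Subgroup.center G) = m.gcd 2 * n := by
    rw [← card_two_nsmul_eq_zero_and_even_val m n]
    exact (Fintype.card_congr <|
      e.subtypeEquiv fun p => (ofCoords_mem_center_iff hrel hgen hM ha2 p).symm).symm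
  rw [graphEnergy_eq_of_adj_iff _ hq hadj, Fintype.card_subtype_compl, Fintype.card_option,
    ← Nat.card_eq_fintype_card (α := (nsmulAddMonoidHom 2 : ZMod m →+ ZMod m).range),
    card_range_two_nsmul, Nat.cast_sub (Fintype.card_subtype_le _), hcard, hZ, Nat.cast_add,
    Nat.cast_div (Nat.gcd_dvd_left m 2) (by positivity)]
  push_cast
  ring

theorem energy_commGraph_metacyclic_general
    (m n : ℕ) (hm : 2 < m)
    (G : Type*) [Group G] [Fintype G] (a b : G)
    (ha : a ^ m = 1) (hb : b ^ (2 * n) = 1) (hrel : b * a * b⁻¹ = a⁻¹)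
    (hgen : Subgroup.closure ({a, b} : Set G) = ⊤)
    (hcard : Fintype.card G = 2 * m * n) :
    (Odd m →
      graphEnergy (commGraph G) = 4 * (m : ℝ) * n - 2 * m - 2 * n - 2) ∧
    (Even m →
      graphEnergy (commGraph G) = 4 * (m : ℝ) * n - 4 * n - m - 2) := by
  rw [graphEnergy_commGraph_of_metacyclic hm ha hb hrel hgen hcard]
  refine ⟨fun hodd => ?_, fun heven => ?_⟩
  · rw [(Nat.coprime_two_right.mpr hodd).gcd_eq_one]
    push_cast
    ring
  · rw [Nat.gcd_eq_right (even_iff_two_dvd.mp heven)]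
    push_cast
    ring

/-- The energy of the commuting graph of the metacyclic group
`M_{2mn} = ⟨a, b : a^m = b^(2n) = 1, b a b⁻¹ = a⁻¹⟩` of order `2mn`, `m > 2`. -/
theorem energy_commGraph_metacyclic
    (m n : ℕ) (hm : 2 < m) (hn : 1 ≤ n)
    (G : Type*) [Group G] [Fintype G] (a b : G)
    (ha : a ^ m = 1) (hb : b ^ (2 * n) = 1) (hrel : b * a * b⁻¹ = a⁻¹)
    (hgen : Subgroup.closure ({a, b} : Set G) = ⊤)
    (hcard : Fintype.card G = 2 * m * n) :
    (Odd m →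
      graphEnergy (commGraph G) = 4 * (m : ℝ) * n - 2 * m - 2 * n - 2) ∧
    (Even m →
      graphEnergy (commGraph G) = 4 * (m : ℝ) * n - 4 * n - m - 2) :=
  energy_commGraph_metacyclic_general m n hm G a b ha hb hrel hgen hcard
end

section
/- Let n ≥ 1 and let U_{6n} = ⟨a, b : a^{2n} = b³ = 1, a^{-1} b a = b^{-1}⟩ be the group of order 6n with this presentation. Then the energy of the commuting graph is E(Γ_{U_{6n}}) = 10n − 8. -/
open scoped Classical

/-!
Write every element of `U_{6n}` uniquely as `a^i b^j` with `i : ZMod (2n)`, `j : ZMod 3`; then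
`a^i b^j` is central iff `i` is even and `j = 0`, and two non-central elements commute iff both
have even `i`, or both have odd `i` and the same `j`. So the commuting graph is a disjoint union of
four cliques, `K_{2n} ⊔ 3 K_n` on `5n` vertices.

For a disjoint union of `k` nonempty cliques on `N` vertices, `A + 1 = M Mᵀ` with `M` the
vertex–clique incidence matrix and `Mᵀ M` diagonal with the clique sizes, so every eigenvalue of
the adjacency matrix `A` is `-1` or `≥ 0`, and `-1` has multiplicity `N - rank (M Mᵀ) = N - k`.
Since `tr A = 0`, the energy is twice that multiplicity, `2 (N - k) = 2 (5n - 4)`.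
-/

namespace Matrix

open Unitary

lemma IsHermitian.rank_sub_smul_one {𝕜 ι : Type*} [RCLike 𝕜] [Fintype ι] [DecidableEq ι]
    {A : Matrix ι ι 𝕜} (hA : A.IsHermitian) (μ : ℝ) :
    (A - (μ : 𝕜) • 1).rank = Fintype.card {i // hA.eigenvalues i ≠ μ} := by
  have hdiag : diagonal (RCLike.ofReal ∘ hA.eigenvalues) - (μ : 𝕜) • (1 : Matrix ι ι 𝕜)
      = diagonal fun i => ((hA.eigenvalues i - μ : ℝ) : 𝕜) := by
    ext i j; by_cases h : i = j <;> simp [h, Algebra.algebraMap_eq_smul_one, sub_smul]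
  conv_lhs => rw [hA.spectral_theorem, ← map_one (conjStarAlgAut 𝕜 _ hA.eigenvectorUnitary),
    ← map_smul, ← map_sub, hdiag, conjStarAlgAut_apply, ← coe_star]
  simp [-isUnit_iff_ne_zero, -coe_star, rank_diagonal, sub_eq_zero]

lemma exists_eq_of_mul_transpose_mulVec_eq_smul {K V τ : Type*} [Field K] [Fintype V]
    [Fintype τ] {M : Matrix V τ K} {d : τ → K} (hM : Mᵀ * M = diagonal d) {v : V → K}
    {β : K} (hv : v ≠ 0) (hβ : β ≠ 0) (h : (M * Mᵀ) *ᵥ v = β • v) :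
    ∃ t, d t = β := by
  set s := Mᵀ *ᵥ v
  have hMs : M *ᵥ s = β • v := by rw [mulVec_mulVec, h]
  have hds : diagonal d *ᵥ s = β • s := by
    rw [← hM, ← mulVec_mulVec, hMs, mulVec_smul]
  obtain ⟨t, ht⟩ : ∃ t, s t ≠ 0 := by
    by_contra! hs
    have : β • v = 0 := by rw [← hMs, funext hs, ← Pi.zero_def, mulVec_zero]
    exact hv ((smul_eq_zero.mp this).resolve_left hβ)
  refine ⟨t, mul_right_cancel₀ ht ?_⟩
  simpa [mulVec_diagonal] using congrFun hds t

end Matrix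

lemma graphEnergy_eq_two_mul_card_eigenvalues_eq_neg_one {V : Type*} [Fintype V]
    (Γ : SimpleGraph V)
    (h : ∀ i, (adjMatrix_isHermitian Γ).eigenvalues i = -1 ∨
      0 ≤ (adjMatrix_isHermitian Γ).eigenvalues i) :
    graphEnergy Γ = 2 * Fintype.card {i // (adjMatrix_isHermitian Γ).eigenvalues i = -1} := by
  set μ := (adjMatrix_isHermitian Γ).eigenvalues
  have habs : ∀ i, |μ i| = μ i + 2 * if μ i = -1 then 1 else 0 := fun i => by
    rcases h i with hi | hi
    · rw [hi, if_pos rfl]; norm_num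
    · simp [abs_of_nonneg hi, (by linarith : μ i ≠ -1)]
  have htrace : ∑ i, μ i = 0 := by
    simpa using (adjMatrix_isHermitian Γ).trace_eq_sum_eigenvalues.symm.trans
      (Γ.trace_adjMatrix (α := ℝ))
  rw [graphEnergy, Finset.sum_congr rfl fun i _ => habs i, Finset.sum_add_distrib, htrace,
    ← Finset.mul_sum, Finset.sum_boole, Fintype.card_subtype, zero_add]

section Fibers

open Matrix

variable {V τ : Type*} (f : V → τ)

noncomputable def fiberMatrix : Matrix V τ ℝ := of fun x t => if f x = t then 1 else 0

lemma fiberMatrix_transpose_mul_self [Fintype V] :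
    (fiberMatrix f)ᵀ * fiberMatrix f = diagonal fun t => (Fintype.card {x // f x = t} : ℝ) := by
  ext s t
  rw [mul_apply, diagonal_apply, Fintype.card_subtype, ← Finset.sum_boole]
  split_ifs with hst
  · subst hst
    refine Finset.sum_congr rfl fun x _ => ?_
    by_cases h : f x = s <;> simp [fiberMatrix, h]
  · refine Finset.sum_eq_zero fun x _ => ?_
    by_cases h : f x = s <;> simp [fiberMatrix, h, hst]

lemma rank_fiberMatrix [Fintype V] [Fintype τ] :
    (fiberMatrix f).rank = Nat.card (Set.range f) := by
  rw [Nat.card_eq_fintype_card, ← rank_transpose_mul_self, fiberMatrix_transpose_mul_self,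
    rank_diagonal]
  refine Fintype.card_congr (Equiv.subtypeEquivRight fun t => ?_)
  simp [Set.mem_range, Fintype.card_eq_zero_iff]

variable {Γ : SimpleGraph V} {f}

lemma adjMatrix_add_one_eq_fiberMatrix_mul_transpose [Fintype τ]
    (h : ∀ x y, Γ.Adj x y ↔ x ≠ y ∧ f x = f y) :
    Γ.adjMatrix ℝ + 1 = fiberMatrix f * (fiberMatrix f)ᵀ := by
  ext x y
  simp only [Matrix.add_apply, SimpleGraph.adjMatrix_apply, h, one_apply, fiberMatrix, mul_apply,
    transpose_apply, of_apply, ite_zero_mul_ite_zero, mul_one]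
  by_cases hxy : x = y
  · subst hxy; simp
  by_cases hf : f x = f y
  · simp [hxy, hf]
  simp only [hxy, hf, ne_eq, not_false_eq_true, and_false, if_false, add_zero]
  refine (Finset.sum_eq_zero fun t _ => if_neg ?_).symm
  rintro ⟨rfl, hyt⟩
  exact hf hyt.symm

lemma eigenvalues_adjMatrix_eq_neg_one_or_nonneg [Fintype V] [Fintype τ]
    (h : ∀ x y, Γ.Adj x y ↔ x ≠ y ∧ f x = f y) (i : V) :
    (adjMatrix_isHermitian Γ).eigenvalues i = -1 ∨
      0 ≤ (adjMatrix_isHermitian Γ).eigenvalues i := by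
  set hA := adjMatrix_isHermitian Γ
  rw [or_iff_not_imp_left, ← ne_eq, ← sub_ne_zero, sub_neg_eq_add]
  intro hβ
  have hv : (hA.eigenvectorBasis i : V → ℝ) ≠ 0 :=
    (WithLp.ofLp_eq_zero 2).ne.2 (hA.eigenvectorBasis.orthonormal.ne_zero i)
  have heig : (fiberMatrix f * (fiberMatrix f)ᵀ) *ᵥ hA.eigenvectorBasis i
      = (hA.eigenvalues i + 1) • hA.eigenvectorBasis i := by
    rw [← adjMatrix_add_one_eq_fiberMatrix_mul_transpose h, add_mulVec, one_mulVec,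
      hA.mulVec_eigenvectorBasis, add_smul, one_smul]
  obtain ⟨t, ht⟩ := exists_eq_of_mul_transpose_mulVec_eq_smul
    (fiberMatrix_transpose_mul_self f) hv hβ heig
  have hcard : (1 : ℝ) ≤ Fintype.card {x // f x = t} := by
    refine Nat.one_le_cast.mpr (Nat.one_le_iff_ne_zero.mpr fun h0 => hβ ?_)
    rw [← ht, h0, Nat.cast_zero]
  linarith

theorem graphEnergy_eq_of_adj_iff_s7 [Fintype V] [Fintype τ]
    (h : ∀ x y, Γ.Adj x y ↔ x ≠ y ∧ f x = f y) :
    graphEnergy Γ = 2 * ((Fintype.card V : ℝ) - Nat.card (Set.range f)) := by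
  rw [graphEnergy_eq_two_mul_card_eigenvalues_eq_neg_one Γ
    (eigenvalues_adjMatrix_eq_neg_one_or_nonneg h)]
  have hrank := (adjMatrix_isHermitian Γ).rank_sub_smul_one (-1)
  rw [RCLike.ofReal_real_eq_id, id, neg_smul, one_smul, sub_neg_eq_add,
    adjMatrix_add_one_eq_fiberMatrix_mul_transpose h, rank_self_mul_transpose, rank_fiberMatrix,
    Fintype.card_subtype_compl] at hrank
  rw [hrank, Nat.cast_sub (Fintype.card_subtype_le _)]
  ring

end Fibers

section Indices

variable {n : ℕ} [NeZero n]

lemma ZMod.val_one_two_mul : (1 : ZMod (2 * n)).val = 1 :=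
  ZMod.val_one_eq_one_mod _ ▸ Nat.mod_eq_of_lt (by have := NeZero.pos n; omega)

lemma ZMod.card_even_val : Fintype.card {i : ZMod (2 * n) // Even i.val} = n := by
  have hshift : ∀ i : ZMod (2 * n), Even i.val ↔ ¬Even (i + 1).val := fun i => by
    rw [ZMod.val_add, ZMod.val_one_two_mul, Nat.even_iff, Nat.even_iff,
      Nat.mod_mod_of_dvd _ (dvd_mul_right 2 n)]
    omega
  have hcompl := Fintype.card_subtype_compl (fun i : ZMod (2 * n) => Even i.val)
  rw [← Fintype.card_congr ((Equiv.addRight 1).subtypeEquiv hshift), ZMod.card] at hcompl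
  omega

variable (n) in
def commClass (p : ZMod (2 * n) × ZMod 3) : Option (ZMod 3) :=
  if Even p.1.val then none else some p.2

lemma exists_noncentral_commClass_eq (t : Option (ZMod 3)) :
    ∃ p : ZMod (2 * n) × ZMod 3, ¬(Even p.1.val ∧ p.2 = 0) ∧ commClass n p = t := by
  cases t with
  | none => exact ⟨(0, 1), by simp [commClass]⟩
  | some j => exact ⟨(1, j), by simp [commClass, ZMod.val_one_two_mul]⟩

end Indices

section Presentation

variable {G : Type*} [Group G] {n : ℕ} {a b : G}

lemma zpow_eq_pow_zmod_val {x : G} {m : ℕ} [NeZero m] (hx : x ^ m = 1) (k : ℤ) :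
    x ^ k = x ^ (k : ZMod m).val := by
  rw [zpow_eq_zpow_emod' k hx, ← ZMod.val_intCast, zpow_natCast]

lemma zpow_mul_pow_of_inv_mul_mul_eq_inv (hrel : a⁻¹ * b * a = b⁻¹) (j : ℤ) (k : ℕ) :
    b ^ j * a ^ k = a ^ k * b ^ ((-1) ^ k * j) := by
  have hstep : ∀ j : ℤ, b ^ j * a = a * b ^ (-j) := fun j => by
    have hconj : (a⁻¹ * b * a⁻¹⁻¹) ^ j = a⁻¹ * b ^ j * a⁻¹⁻¹ := conj_zpow
    rw [inv_inv, hrel, inv_zpow'] at hconj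
    rw [hconj]; group
  induction k generalizing j with
  | zero => simp
  | succ k ih =>
    rw [pow_succ, ← mul_assoc, ih, mul_assoc, hstep, ← mul_assoc, ← pow_succ]
    congr 2; ring

variable (n a b) in
def normalForm (p : ZMod (2 * n) × ZMod 3) : G := a ^ p.1.val * b ^ p.2.val

variable [NeZero n] (ha : a ^ (2 * n) = 1) (hb : b ^ 3 = 1) (hrel : a⁻¹ * b * a = b⁻¹)
include ha hb hrel

lemma normalForm_mul (p q : ZMod (2 * n) × ZMod 3) :
    normalForm n a b p * normalForm n a b q
      = normalForm n a b (p.1 + q.1, (-1) ^ q.1.val * p.2 + q.2) := by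
  have hswap := zpow_mul_pow_of_inv_mul_mul_eq_inv hrel (p.2.val : ℤ) q.1.val
  rw [zpow_natCast] at hswap
  calc normalForm n a b p * normalForm n a b q
      = a ^ ((p.1.val + q.1.val : ℕ) : ℤ) *
          b ^ ((-1) ^ q.1.val * (p.2.val : ℤ) + q.2.val) := by
        rw [normalForm, normalForm, zpow_natCast, zpow_add, zpow_natCast, pow_add,
          mul_assoc, ← mul_assoc (b ^ _), hswap]
        group
    _ = _ := by
        rw [zpow_eq_pow_zmod_val ha, zpow_eq_pow_zmod_val hb, normalForm]
        push_cast
        simp only [ZMod.natCast_val, ZMod.cast_id', id]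

lemma normalForm_surjective [Finite G] (hgen : Subgroup.closure ({a, b} : Set G) = ⊤) :
    Function.Surjective (normalForm n a b) := by
  let S : Submonoid G :=
    { carrier := Set.range (normalForm n a b)
      mul_mem' := by
        rintro _ _ ⟨p, rfl⟩ ⟨q, rfl⟩
        exact ⟨_, (normalForm_mul ha hb hrel p q).symm⟩
      one_mem' := ⟨0, by simp [normalForm]⟩ }
  have hgens : {a, b} ⊆ (S : Set G) := by
    rintro _ (rfl | rfl)
    · exact ⟨(1, 0), by simp [normalForm, ZMod.val_one_two_mul]⟩
    · exact ⟨(0, 1), by simp [normalForm, ZMod.val_one]⟩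
  intro g
  have hg : g ∈ (Subgroup.closure ({a, b} : Set G)).toSubmonoid := hgen ▸ Subgroup.mem_top g
  rw [Subgroup.closure_toSubmonoid_of_finite] at hg
  exact Submonoid.closure_le.mpr hgens hg

lemma normalForm_bijective [Fintype G] (hgen : Subgroup.closure ({a, b} : Set G) = ⊤)
    (hcard : Fintype.card G = 6 * n) : Function.Bijective (normalForm n a b) := by
  rw [Fintype.bijective_iff_surjective_and_card, Fintype.card_prod, ZMod.card, ZMod.card, hcard]
  exact ⟨normalForm_surjective ha hb hrel hgen, by ring⟩

variable (hbij : Function.Bijective (normalForm n a b))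
include hbij

lemma normalForm_commute_iff (p q : ZMod (2 * n) × ZMod 3) :
    Commute (normalForm n a b p) (normalForm n a b q) ↔
      (-1) ^ q.1.val * p.2 + q.2 = (-1) ^ p.1.val * q.2 + p.2 := by
  rw [Commute, SemiconjBy, normalForm_mul ha hb hrel, normalForm_mul ha hb hrel,
    hbij.injective.eq_iff, add_comm q.1, Prod.mk.injEq]
  simp

lemma normalForm_mem_center_iff (p : ZMod (2 * n) × ZMod 3) :
    normalForm n a b p ∈ Subgroup.center G ↔ Even p.1.val ∧ p.2 = 0 := by
  simp only [Subgroup.mem_center_iff, hbij.surjective.forall]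
  change (∀ q, Commute _ _) ↔ _
  simp only [normalForm_commute_iff ha hb hrel hbij]
  constructor
  · intro h
    have h10 := h (1, 0)
    have h01 := h (0, 1)
    simp only [ZMod.val_zero, ZMod.val_one_two_mul, pow_zero, pow_one, one_mul, mul_one,
      mul_zero, add_zero, zero_add, neg_mul] at h10 h01
    refine ⟨(neg_one_pow_eq_one_iff_even (R := ZMod 3) (by decide)).mp
      (by simpa [add_comm] using h01), ?_⟩
    exact (by decide : ∀ u : ZMod 3, u = -u → u = 0) _ h10
  · rintro ⟨hp1, hp2⟩ q
    simp [hp2, hp1.neg_one_pow]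

lemma normalForm_commute_iff_commClass_eq {p q : ZMod (2 * n) × ZMod 3}
    (hp : normalForm n a b p ∉ Subgroup.center G)
    (hq : normalForm n a b q ∉ Subgroup.center G) :
    Commute (normalForm n a b p) (normalForm n a b q) ↔ commClass n p = commClass n q := by
  rw [normalForm_mem_center_iff ha hb hrel hbij] at hp hq
  rw [normalForm_commute_iff ha hb hrel hbij, commClass, commClass]
  simp only [neg_one_pow_eq_ite]
  by_cases hp1 : Even p.1.val <;> by_cases hq1 : Even q.1.val <;>
    simp only [hp1, hq1, if_true, if_false, true_and, false_and, not_false_eq_true] at hp hq ⊢ <;>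
    revert hp hq <;> generalize p.2 = u <;> generalize q.2 = v <;> decide +revert

lemma card_notMem_center [Fintype G] (hcard : Fintype.card G = 6 * n) :
    Fintype.card {g : G // g ∉ Subgroup.center G} = 5 * n := by
  have hcenter : Fintype.card {g : G // g ∈ Subgroup.center G} = n := by
    rw [← Fintype.card_congr ((Equiv.ofBijective _ hbij).subtypeEquiv fun p =>
        (normalForm_mem_center_iff ha hb hrel hbij p).symm),
      Fintype.card_congr (Equiv.subtypeProdEquivProd
        (p := fun i : ZMod (2 * n) => Even i.val) (q := fun j : ZMod 3 => j = 0)),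
      Fintype.card_prod, ZMod.card_even_val, Fintype.card_subtype_eq, mul_one]
  rw [Fintype.card_subtype_compl, hcenter, hcard]
  omega

end Presentation

/-- The energy of the commuting graph of the group
`U_{6n} = ⟨a, b : a^(2n) = b³ = 1, a⁻¹ b a = b⁻¹⟩` of order `6n`. -/
theorem energy_commGraph_U6n
    (n : ℕ) (hn : 1 ≤ n)
    (G : Type*) [Group G] [Fintype G] (a b : G)
    (ha : a ^ (2 * n) = 1) (hb : b ^ 3 = 1) (hrel : a⁻¹ * b * a = b⁻¹)
    (hgen : Subgroup.closure ({a, b} : Set G) = ⊤)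
    (hcard : Fintype.card G = 6 * n) :
    graphEnergy (commGraph G) = 10 * (n : ℝ) - 8 := by
  have : NeZero n := ⟨by omega⟩
  have hbij := normalForm_bijective ha hb hrel hgen hcard
  let e := Equiv.ofBijective _ hbij
  let f : {g : G // g ∉ Subgroup.center G} → Option (ZMod 3) := fun x => commClass n (e.symm x)
  have hadj : ∀ x y, (commGraph G).Adj x y ↔ x ≠ y ∧ f x = f y := fun x y => by
    have hx : normalForm n a b (e.symm x) = x := e.apply_symm_apply x.1
    have hy : normalForm n a b (e.symm y) = y := e.apply_symm_apply y.1
    refine and_congr_right fun _ => ?_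
    rw [← normalForm_commute_iff_commClass_eq ha hb hrel hbij (hx.symm ▸ x.2) (hy.symm ▸ y.2),
      hx, hy]
    rfl
  have hsurj : Function.Surjective f := fun t => by
    obtain ⟨p, hp, rfl⟩ := exists_noncentral_commClass_eq (n := n) t
    exact ⟨⟨e p, (normalForm_mem_center_iff ha hb hrel hbij p).not.mpr hp⟩, by simp [f]⟩
  have hrange : Nat.card (Set.range f) = 4 := by
    rw [Set.range_eq_univ.mpr hsurj, Nat.card_univ, Nat.card_eq_fintype_card]
    rfl
  rw [graphEnergy_eq_of_adj_iff_s7 hadj, card_notMem_center ha hb hrel hbij hcard, hrange]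
  push_cast
  ring
end
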